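/- arXiv:2404.09183 — 2 statements merged into one kernel-verified Lean document; each statement's English description precedes it below -/
import Mathlib

section
/- Godbillon–Vey class independence: In a graded-commutative DGA A over a field of characteristic 0, suppose ω is a degree-1 element with d ω = θ·ω = θ'·ω for degree-1 elements θ, θ'. If additionally (θ - θ')·ω = 0 implies θ - θ' = f·ω for some degree-0 element f, then θ·(d θ) and θ'·(d θ') differ by an exact element: θ·(d θ) - θ'·(d θ') ∈ image of d. -/
/-- Godbillon–Vey class independence: in a graded-commutative DGA
over a field of characteristic 0, if `d ω = θ * ω = θ' * ω` with `ω, θ, θ'`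
of degree 1, and `θ - θ' = f * ω` for a degree-0 element `f`, then
`θ * d θ - θ' * d θ'` is exact. -/
theorem stmt7 (K A : Type*) [Field K] [CharZero K] [Ring A] [Algebra K A]
    (homog : ℕ → Set A) (d : A →ₗ[K] A)
    (hd2 : ∀ x, d (d x) = 0)
    (hdeg : ∀ n x, x ∈ homog n → d x ∈ homog (n + 1))
    (hLeib : ∀ (m : ℕ) (x y : A), x ∈ homog m →
      d (x * y) = d x * y + ((-1 : ℤ) ^ m) • (x * d y))
    (hcomm : ∀ (m n : ℕ) (x y : A), x ∈ homog m → y ∈ homog n →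
      x * y = ((-1 : ℤ) ^ (m * n)) • (y * x))
    (ω θ θ' f : A) (hω : ω ∈ homog 1) (hθ : θ ∈ homog 1) (hθ' : θ' ∈ homog 1)
    (hf : f ∈ homog 0)
    (hdω : d ω = θ * ω) (hdω' : d ω = θ' * ω)
    (hdiff : θ - θ' = f * ω) :
    θ * d θ - θ' * d θ' ∈ Set.range d := by
  -- anticommutation of degree-1 elements
  have swap1 : ∀ x y : A, x ∈ homog 1 → y ∈ homog 1 → x * y = -(y * x) := by
    intro x y hx hy
    have h := hcomm 1 1 x y hx hy
    simpa using h
  have swap1' : ∀ x y z : A, x ∈ homog 1 → y ∈ homog 1 →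
      x * (y * z) = -(y * (x * z)) := by
    intro x y z hx hy
    rw [← mul_assoc, swap1 x y hx hy, neg_mul, mul_assoc]
  -- degree-0 elements commute
  have swap0 : ∀ (m : ℕ) (x : A), x ∈ homog m → x * f = f * x := by
    intro m x hx
    have h := hcomm 0 m f x hf hx
    simpa using h.symm
  have swap0' : ∀ (m : ℕ) (x : A), x ∈ homog m → ∀ z, x * (f * z) = f * (x * z) := by
    intro m x hx z
    rw [← mul_assoc, swap0 m x hx, mul_assoc]
  -- squares of degree-1 elements vanish
  have sqz : ∀ x : A, x ∈ homog 1 → x * x = 0 := by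
    intro x hx
    have h := swap1 x x hx hx
    have h2 : (2 : K) • (x * x) = 0 := by
      rw [two_smul]
      rw [eq_neg_iff_add_eq_zero] at h
      exact h
    rcases smul_eq_zero.mp h2 with h3 | h3
    · exact absurd h3 (by norm_num)
    · exact h3
  have sqz' : ∀ x z : A, x ∈ homog 1 → x * (x * z) = 0 := by
    intro x z hx
    rw [← mul_assoc, sqz x hx, zero_mul]
  have hdf : d f ∈ homog 1 := hdeg 0 f hf
  have hdθ'2 : d θ' ∈ homog 2 := hdeg 1 θ' hθ'
  -- d θ' * ω = 0
  have hkey : d θ' * ω = 0 := by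
    have h := hLeib 1 θ' ω hθ'
    rw [← hdω', hd2, hdω'] at h
    simp only [pow_one, neg_smul, one_smul, neg_zsmul, one_zsmul] at h
    rw [sqz' θ' ω hθ', neg_zero, add_zero] at h
    exact h.symm
  have hkey' : ∀ z, d θ' * (ω * z) = 0 := by
    intro z; rw [← mul_assoc, hkey, zero_mul]
  have hkey2 : ω * d θ' = 0 := by
    have h := hcomm 1 2 ω (d θ') hω hdθ'2
    simpa [hkey] using h
  -- the primitive
  refine ⟨f * (ω * θ'), ?_⟩
  have hθeq : θ = f * ω + θ' := by rw [← hdiff, sub_add_cancel]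
  have hdθ : d θ = (d f * ω + f * (θ' * ω)) + d θ' := by
    rw [hθeq, map_add]
    congr 1
    rw [hLeib 0 f ω hf, hdω']
    simp
  have hwit : d (f * (ω * θ')) = d f * (ω * θ') + f * ((θ' * ω) * θ' - ω * d θ') := by
    rw [hLeib 0 f (ω * θ') hf, hLeib 1 ω θ' hω, hdω']
    simp [mul_sub, sub_eq_add_neg]
  rw [hwit, hdθ, hθeq]
  simp only [mul_add, add_mul, mul_sub, sub_mul, mul_assoc,
    swap1 ω θ' hω hθ', swap1' ω θ' _ hω hθ',
    swap1 ω (d f) hω hdf, swap1' ω (d f) _ hω hdf,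
    swap1 θ' (d f) hθ' hdf, swap1' θ' (d f) _ hθ' hdf,
    swap0 1 ω hω, swap0' 1 ω hω, swap0 1 θ' hθ', swap0' 1 θ' hθ',
    swap0 1 (d f) hdf, swap0' 1 (d f) hdf,
    sqz θ' hθ', sqz' θ' _ hθ', sqz ω hω, sqz' ω _ hω,
    hkey, hkey', hkey2, mul_neg, neg_mul, mul_zero, zero_mul, neg_zero,
    add_zero, zero_add, neg_neg, mul_one, sub_zero, zero_sub]
  noncomm_ring
end

section
/- Let δ, Δ be commuting derivations (ungraded Leibniz, δ² = 0) on an associative algebra A, and let φ, η ∈ A satisfy (δφ)·x·(δφ) = (δη)·x·(δη) = (δφ)·x·(δη) = (δη)·x·(δφ) = 0 for all x ∈ A, and suppose moreover that all products of the form (δ a)·(δ b)·c and (Δ a)·(δ b)·(δ c) with δ-factors among {δφ, δη} vanish. Then (Δδ(φ+η))·(δ(φ+η))·(φ+η) − (Δδφ)·(δφ)·φ − (Δδη)·(δη)·η = δ(ξ), where ξ = (Δφ)·(δφ)·η + (Δφ)·(δη)·φ + (Δφ)·(δη)·η + (Δη)·(δφ)·φ + (Δη)·(δφ)·η + (Δη)·(δη)·φ.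 -/
/-- Invariance of the class `[(Δδφ)·(δφ)·φ]` under
`φ ↦ φ + η`: with commuting (ungraded) derivations `δ, Δ`, `δ² = 0`, and all
products with two factors from `{δφ, δη}` (adjacent or separated) vanishing,
the difference
`(Δδ(φ+η))·(δ(φ+η))·(φ+η) − (Δδφ)·(δφ)·φ − (Δδη)·(δη)·η`
equals `δ` of the explicit element
`ξ = (Δφ)(δφ)η + (Δφ)(δη)φ + (Δφ)(δη)η + (Δη)(δφ)φ + (Δη)(δφ)η + (Δη)(δη)φ`. -/
theorem stmt11 (R A : Type*) [CommRing R] [Ring A] [Algebra R A]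
    (δ Δ : A →ₗ[R] A)
    (hδLeib : ∀ x y : A, δ (x * y) = δ x * y + x * δ y)
    (hΔLeib : ∀ x y : A, Δ (x * y) = Δ x * y + x * Δ y)
    (hδ2 : ∀ x, δ (δ x) = 0)
    (hcomm : ∀ x, δ (Δ x) = Δ (δ x))
    (φ η : A)
    (hvanish : ∀ u ∈ ({δ φ, δ η} : Set A), ∀ v ∈ ({δ φ, δ η} : Set A),
      (∀ x : A, u * x * v = 0) ∧ u * v = 0) :
    Δ (δ (φ + η)) * δ (φ + η) * (φ + η)
        - Δ (δ φ) * δ φ * φ - Δ (δ η) * δ η * η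
      = δ (Δ φ * δ φ * η + Δ φ * δ η * φ + Δ φ * δ η * η
          + Δ η * δ φ * φ + Δ η * δ φ * η + Δ η * δ η * φ) := by
  have hpp : δ φ * δ φ = 0 := (hvanish _ (Or.inl rfl) _ (Or.inl rfl)).2
  have hpe : δ φ * δ η = 0 := (hvanish _ (Or.inl rfl) _ (Or.inr rfl)).2
  have hep : δ η * δ φ = 0 := (hvanish _ (Or.inr rfl) _ (Or.inl rfl)).2
  have hee : δ η * δ η = 0 := (hvanish _ (Or.inr rfl) _ (Or.inr rfl)).2
  have key : ∀ a b c : A, δ b * δ c = 0 → δ (Δ a * δ b * c) = Δ (δ a) * δ b * c := by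
    intro a b c h
    rw [hδLeib, hδLeib, hδ2, hcomm, mul_zero, add_zero, mul_assoc (Δ a) (δ b), h, mul_zero, add_zero, mul_assoc]
  simp only [map_add]
  rw [key φ φ η hpe, key φ η φ hep, key φ η η hee, key η φ φ hpp, key η φ η hpe,
    key η η φ hep]
  noncomm_ring
end
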